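/- Let K = ∫₀^∞ (log u)/(2 cosh²(u/2)) du. Then there exist constants C and β₀ > 0 such that for all β ≥ β₀, the particle–hole bubble B_ph(β) = ∫_{[−1,1]²} (−δ_β(x y)) dx dy satisfies |B_ph(β) + 2 log β − 2 K| ≤ C e^{−β}. -/

import Mathlib

/-!
The inner integral is explicit, `∫_{-1}^{1} δ_β(xy) dy = tanh(βx/2)/x`, so after substituting
`u = βx` and using evenness, `B_ph(β) = -2 ∫_0^β tanh(u/2)/u du`. The weight `1/(2 cosh²(u/2))`
in `K` is the derivative of `tanh(u/2)`; integrating by parts against `tanh(u/2)` on `(0, β]` and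
against `tanh(u/2) - 1` on `(β, ∞)` gives
`K = log β - ∫_0^β tanh(u/2)/u du + ∫_β^∞ (1 - tanh(u/2))/u du`.
So `B_ph(β) + 2 log β - 2K` is minus twice the last integral, which is at most `2 e^{-β}/β`
because `1 - tanh t ≤ 2 e^{-2t}`.
-/

open MeasureTheory

/-- The approximate delta function `δ_β(E) = β/(4 cosh²(βE/2))`. -/
noncomputable def deltaB (β E : ℝ) : ℝ := β / (4 * (Real.cosh (β * E / 2)) ^ 2)

/-- The particle–hole bubble `B_ph(β) = ∫_{[-1,1]²} (-δ_β(xy)) dx dy`. -/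
noncomputable def Bph (β : ℝ) : ℝ :=
  ∫ x in (-1 : ℝ)..1, ∫ y in (-1 : ℝ)..1, -deltaB β (x * y)

open Real Set Filter Topology

lemma hasDerivAt_tanh (x : ℝ) : HasDerivAt tanh (cosh x ^ 2)⁻¹ x := by
  have h := (hasDerivAt_sinh x).div (hasDerivAt_cosh x) (cosh_pos x).ne'
  rw [← sq, ← sq, cosh_sq_sub_sinh_sq, one_div] at h
  rwa [show tanh = sinh / cosh from funext tanh_eq_sinh_div_cosh]

lemma continuous_tanh : Continuous tanh :=
  continuous_iff_continuousAt.2 fun x => (hasDerivAt_tanh x).continuousAt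

lemma abs_tanh_le_abs (x : ℝ) : |tanh x| ≤ |x| := by
  have h := Convex.norm_image_sub_le_of_norm_hasDerivWithin_le (f := tanh) (C := 1)
    (fun y _ => (hasDerivAt_tanh y).hasDerivWithinAt)
    (fun y _ => by
      rw [norm_inv, norm_pow, Real.norm_eq_abs, abs_of_pos (cosh_pos y)]
      exact inv_le_one_of_one_le₀ (one_le_pow₀ (one_le_cosh y)))
    convex_univ (mem_univ 0) (mem_univ x)
  simpa using h

lemma one_sub_tanh_nonneg (x : ℝ) : 0 ≤ 1 - tanh x :=
  sub_nonneg.2 (tanh_lt_one x).le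

lemma one_sub_tanh_le (x : ℝ) : 1 - tanh x ≤ 2 * exp (-(2 * x)) := by
  have hexp : exp (-(2 * x)) * exp x = exp (-x) := by rw [← exp_add]; ring_nf
  rw [tanh_eq, one_sub_div (by positivity), div_le_iff₀ (by positivity)]
  nlinarith [exp_pos x, exp_pos (-x), exp_pos (-(2 * x))]

lemma one_sub_tanh_half_le (u : ℝ) : 1 - tanh (u / 2) ≤ 2 * exp (-u) := by
  simpa only [mul_div_cancel₀ u two_ne_zero] using one_sub_tanh_le (u / 2)

lemma intervalIntegral.integral_neg_self_of_even {f : ℝ → ℝ} {a : ℝ}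
    (hf : ∀ x, f (-x) = f x) (hint : IntervalIntegrable f volume (-a) a) :
    ∫ x in -a..a, f x = 2 * ∫ x in 0..a, f x := by
  have hneg : ∫ x in -a..0, f x = ∫ x in 0..a, f x := by
    simpa [hf] using (intervalIntegral.integral_comp_neg (a := 0) (b := a) f).symm
  have hzero : (0 : ℝ) ∈ uIcc (-a) a := by simp [mem_uIcc]; grind
  rw [← intervalIntegral.integral_add_adjacent_intervals (b := 0)
    (hint.mono_set (uIcc_subset_uIcc_left hzero))
    (hint.mono_set (uIcc_subset_uIcc_right hzero)), hneg, two_mul]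

lemma integral_deltaB_mul (β : ℝ) {x : ℝ} (hx : x ≠ 0) :
    ∫ y in (-1 : ℝ)..1, deltaB β (x * y) = tanh (β * x / 2) / x := by
  have hderiv (y : ℝ) :
      HasDerivAt (fun y => tanh (β * x / 2 * y) / (2 * x)) (deltaB β (x * y)) y := by
    refine (((hasDerivAt_tanh _).comp y ((hasDerivAt_id y).const_mul (β * x / 2))).div_const
      (2 * x)).congr_deriv ?_
    simp only [deltaB, id, mul_one]
    field_simp
    ring_nf
  have hcont : Continuous fun y => deltaB β (x * y) :=
    continuous_const.div (by fun_prop) fun y => by positivity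
  rw [intervalIntegral.integral_eq_sub_of_hasDerivAt (fun y _ => hderiv y)
    (hcont.intervalIntegrable _ _)]
  simp only [mul_one, mul_neg, tanh_neg]
  field_simp
  ring

lemma intervalIntegrable_tanh_half_div (a b : ℝ) :
    IntervalIntegrable (fun u => tanh (u / 2) / u) volume a b := by
  refine (intervalIntegrable_const (c := (1 / 2 : ℝ))).mono_fun'
    ((continuous_tanh.measurable.comp (measurable_id.div_const 2)).div measurable_id
      ).aestronglyMeasurable (ae_of_all _ fun u => ?_)
  rcases eq_or_ne u 0 with rfl | hu
  · simp
  · dsimp only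
    rw [norm_div, div_le_iff₀ (norm_pos_iff.2 hu), Real.norm_eq_abs, Real.norm_eq_abs]
    calc |tanh (u / 2)| ≤ |u / 2| := abs_tanh_le_abs _
      _ = 1 / 2 * |u| := by rw [abs_div, abs_two]; ring

lemma Bph_eq_neg_two_mul_integral {β : ℝ} (hβ : 0 < β) :
    Bph β = -2 * ∫ u in (0 : ℝ)..β, tanh (u / 2) / u := by
  have hscale (x : ℝ) : tanh (β * x / 2) / x = β * (tanh (β * x / 2) / (β * x)) := by
    rcases eq_or_ne x 0 with rfl | hx
    · simp
    · field_simp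
  have hne : ∀ᵐ x : ℝ, x ≠ 0 := compl_mem_ae_iff.2 (measure_singleton 0)
  calc Bph β = -∫ x in (-1 : ℝ)..1, tanh (β * x / 2) / x := by
        rw [Bph, ← intervalIntegral.integral_neg]
        refine intervalIntegral.integral_congr_ae (hne.mono fun x hx _ => ?_)
        rw [intervalIntegral.integral_neg, integral_deltaB_mul β hx]
    _ = -∫ u in -β..β, tanh (u / 2) / u := by
        simp_rw [hscale, intervalIntegral.integral_const_mul,
          intervalIntegral.integral_comp_mul_left (fun u => tanh (u / 2) / u) hβ.ne']
        simp [hβ.ne']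
    _ = -2 * ∫ u in (0 : ℝ)..β, tanh (u / 2) / u := by
        rw [intervalIntegral.integral_neg_self_of_even
          (fun u => by rw [neg_div, tanh_neg, neg_div_neg_eq])
          (intervalIntegrable_tanh_half_div _ _)]
        ring

lemma hasDerivAt_tanh_half (x : ℝ) :
    HasDerivAt (fun u => tanh (u / 2)) (2 * cosh (x / 2) ^ 2)⁻¹ x := by
  refine ((hasDerivAt_tanh _).comp x ((hasDerivAt_id x).div_const 2)).congr_deriv ?_
  simp only [id, mul_inv]
  ring

lemma inv_two_mul_cosh_half_sq_le (u : ℝ) : (2 * cosh (u / 2) ^ 2)⁻¹ ≤ 2 * exp (-u) := by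
  have hcosh : exp (u / 2) / 2 ≤ cosh (u / 2) := by
    rw [cosh_eq]; linarith [exp_pos (-(u / 2))]
  have hsq : exp u = exp (u / 2) ^ 2 := by rw [← exp_nat_mul]; ring_nf
  rw [exp_neg, inv_le_iff_one_le_mul₀ (by positivity), hsq]
  have := pow_le_pow_left₀ (by positivity) hcosh 2
  field_simp
  nlinarith

noncomputable def logSechSqHalf (u : ℝ) : ℝ := log u / (2 * cosh (u / 2) ^ 2)

lemma hasDerivAt_log_mul_tanh_half_sub (c : ℝ) {x : ℝ} (hx : 0 < x) :
    HasDerivAt (fun u => log u * (tanh (u / 2) - c)) ((tanh (x / 2) - c) / x + logSechSqHalf x)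
      x := by
  refine ((hasDerivAt_log hx.ne').mul ((hasDerivAt_tanh_half x).sub_const c)).congr_deriv ?_
  rw [logSechSqHalf]
  ring

lemma measurable_logSechSqHalf : Measurable logSechSqHalf :=
  measurable_log.div (by fun_prop)

lemma norm_logSechSqHalf_le_abs_log (u : ℝ) : ‖logSechSqHalf u‖ ≤ |log u| := by
  have hden : 1 ≤ 2 * cosh (u / 2) ^ 2 := by nlinarith [one_le_cosh (u / 2)]
  rw [logSechSqHalf, norm_div, Real.norm_eq_abs, Real.norm_of_nonneg (by positivity)]
  exact div_le_self (abs_nonneg _) hden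

lemma norm_logSechSqHalf_le {u : ℝ} (hu : 1 ≤ u) :
    ‖logSechSqHalf u‖ ≤ 2 * (exp (-u) * u) := by
  rw [logSechSqHalf, norm_div, Real.norm_eq_abs, Real.norm_of_nonneg (by positivity),
    abs_of_nonneg (log_nonneg hu), div_eq_mul_inv]
  calc log u * (2 * cosh (u / 2) ^ 2)⁻¹ ≤ u * (2 * exp (-u)) :=
        mul_le_mul (log_le_self (by linarith)) (inv_two_mul_cosh_half_sq_le u) (by positivity)
          (by linarith)
    _ = 2 * (exp (-u) * u) := by ring

lemma integrableOn_logSechSqHalf : IntegrableOn logSechSqHalf (Ioi 0) := by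
  rw [← Ioc_union_Ioi_eq_Ioi zero_le_one, integrableOn_union]
  constructor
  · exact (intervalIntegral.intervalIntegrable_log' (a := 0) (b := 1)).1.norm.mono'
      measurable_logSechSqHalf.aestronglyMeasurable
      (ae_of_all _ fun u => by simpa using norm_logSechSqHalf_le_abs_log u)
  · have hgamma : IntegrableOn (fun u => exp (-u) * u) (Ioi 1) := by
      simpa [show (2 : ℝ) - 1 = 1 by norm_num] using
        (GammaIntegral_convergent two_pos).mono_set (Ioi_subset_Ioi zero_le_one)
    refine (hgamma.const_mul 2).mono' measurable_logSechSqHalf.aestronglyMeasurable ?_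
    exact (ae_restrict_iff' measurableSet_Ioi).2 (ae_of_all _ fun u hu =>
      norm_logSechSqHalf_le (le_of_lt hu))

lemma tendsto_log_mul_tanh_half_nhdsGT_zero :
    Tendsto (fun u => log u * tanh (u / 2)) (𝓝[>] 0) (𝓝 0) := by
  have hmul : Tendsto (fun u => u * log u) (𝓝[>] 0) (𝓝 0) := by
    simpa using continuous_mul_log.tendsto 0 |>.mono_left nhdsWithin_le_nhds
  refine squeeze_zero_norm' (eventually_nhdsWithin_of_forall fun u _ => ?_)
    (by simpa using hmul.norm)
  rw [norm_mul, Real.norm_eq_abs, Real.norm_eq_abs, mul_comm]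
  refine mul_le_mul_of_nonneg_right ?_ (abs_nonneg _)
  calc |tanh (u / 2)| ≤ |u / 2| := abs_tanh_le_abs _
    _ ≤ |u| := by rw [abs_div, abs_two]; linarith [abs_nonneg u]

lemma tendsto_log_mul_tanh_half_sub_one_atTop :
    Tendsto (fun u => log u * (tanh (u / 2) - 1)) atTop (𝓝 0) := by
  have hdecay := (tendsto_pow_mul_exp_neg_atTop_nhds_zero 1).const_mul 2
  rw [mul_zero] at hdecay
  refine squeeze_zero_norm' ((eventually_ge_atTop 1).mono fun u hu => ?_) hdecay
  rw [norm_mul, Real.norm_of_nonneg (log_nonneg hu), norm_sub_rev,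
    Real.norm_of_nonneg (one_sub_tanh_nonneg _), pow_one]
  calc log u * (1 - tanh (u / 2)) ≤ u * (2 * exp (-u)) :=
        mul_le_mul (log_le_self (by linarith)) (one_sub_tanh_half_le u) (one_sub_tanh_nonneg _)
          (by linarith)
    _ = 2 * (u * exp (-u)) := by ring

lemma one_sub_tanh_half_div_le {β u : ℝ} (hβ : 0 < β) (hu : β ≤ u) :
    (1 - tanh (u / 2)) / u ≤ 2 / β * exp (-u) := by
  calc (1 - tanh (u / 2)) / u ≤ (1 - tanh (u / 2)) / β :=
        div_le_div_of_nonneg_left (one_sub_tanh_nonneg _) hβ hu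
    _ ≤ 2 * exp (-u) / β := by gcongr; exact one_sub_tanh_half_le u
    _ = 2 / β * exp (-u) := by ring

lemma one_sub_tanh_half_div_nonneg {u : ℝ} (hu : 0 ≤ u) : 0 ≤ (1 - tanh (u / 2)) / u :=
  div_nonneg (one_sub_tanh_nonneg _) hu

lemma integrableOn_one_sub_tanh_half_div {β : ℝ} (hβ : 0 < β) :
    IntegrableOn (fun u => (1 - tanh (u / 2)) / u) (Ioi β) := by
  refine ((integrableOn_exp_neg_Ioi β).const_mul (2 / β)).mono'
    ((measurable_const.sub (continuous_tanh.measurable.comp (measurable_id.div_const 2))).div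
      measurable_id).aestronglyMeasurable ?_
  refine (ae_restrict_iff' measurableSet_Ioi).2 (ae_of_all _ fun u (hu : β < u) => ?_)
  rw [Real.norm_of_nonneg (one_sub_tanh_half_div_nonneg (hβ.trans hu).le)]
  exact one_sub_tanh_half_div_le hβ hu.le

lemma integral_one_sub_tanh_half_div_le {β : ℝ} (hβ : 0 < β) :
    ∫ u in Ioi β, (1 - tanh (u / 2)) / u ≤ 2 / β * exp (-β) := by
  rw [← integral_exp_neg_Ioi, ← integral_const_mul]
  exact setIntegral_mono_on (integrableOn_one_sub_tanh_half_div hβ)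
    ((integrableOn_exp_neg_Ioi β).const_mul _) measurableSet_Ioi
    fun u (hu : β < u) => one_sub_tanh_half_div_le hβ hu.le

lemma integral_one_sub_tanh_half_div_nonneg {β : ℝ} (hβ : 0 < β) :
    0 ≤ ∫ u in Ioi β, (1 - tanh (u / 2)) / u :=
  setIntegral_nonneg measurableSet_Ioi fun u (hu : β < u) =>
    one_sub_tanh_half_div_nonneg (hβ.trans hu).le

lemma setIntegral_Ioc_logSechSqHalf {β : ℝ} (hβ : 0 < β) :
    ∫ u in Ioc 0 β, logSechSqHalf u =
      log β * tanh (β / 2) - ∫ u in (0 : ℝ)..β, tanh (u / 2) / u := by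
  have hkernel : IntervalIntegrable logSechSqHalf volume 0 β :=
    (intervalIntegrable_iff_integrableOn_Ioc_of_le hβ.le).2
      (integrableOn_logSechSqHalf.mono_set Ioc_subset_Ioi_self)
  have hderiv {x : ℝ} (hx : 0 < x) : HasDerivAt (fun u => log u * tanh (u / 2))
      (tanh (x / 2) / x + logSechSqHalf x) x := by
    simpa only [sub_zero] using hasDerivAt_log_mul_tanh_half_sub 0 hx
  have hftc := intervalIntegral.integral_eq_sub_of_hasDerivAt_of_tendsto hβ
    (fun x hx => hderiv hx.1) ((intervalIntegrable_tanh_half_div 0 β).add hkernel)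
    tendsto_log_mul_tanh_half_nhdsGT_zero
    ((hderiv hβ).continuousAt.tendsto.mono_left nhdsWithin_le_nhds)
  rw [intervalIntegral.integral_add (intervalIntegrable_tanh_half_div 0 β) hkernel] at hftc
  rw [← intervalIntegral.integral_of_le hβ.le]
  linarith

lemma setIntegral_Ioi_logSechSqHalf {β : ℝ} (hβ : 0 < β) :
    ∫ u in Ioi β, logSechSqHalf u =
      log β * (1 - tanh (β / 2)) + ∫ u in Ioi β, (1 - tanh (u / 2)) / u := by
  have hkernel := integrableOn_logSechSqHalf.mono_set (Ioi_subset_Ioi hβ.le)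
  have htail := integrableOn_one_sub_tanh_half_div hβ
  have hsplit : ∫ u in Ioi β, ((tanh (u / 2) - 1) / u + logSechSqHalf u) =
      -(∫ u in Ioi β, (1 - tanh (u / 2)) / u) + ∫ u in Ioi β, logSechSqHalf u := by
    rw [← integral_neg,
      ← integral_add (f := fun u => -((1 - tanh (u / 2)) / u)) htail.neg hkernel]
    exact setIntegral_congr_fun measurableSet_Ioi fun u _ => by ring
  have hftc := integral_Ioi_of_hasDerivAt_of_tendsto
    (hasDerivAt_log_mul_tanh_half_sub 1 hβ).continuousAt.continuousWithinAt
    (fun x hx => hasDerivAt_log_mul_tanh_half_sub 1 (hβ.trans hx))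
    ((htail.neg.add hkernel).congr_fun
      (fun u _ => by simp only [Pi.add_apply, Pi.neg_apply]; ring) measurableSet_Ioi)
    tendsto_log_mul_tanh_half_sub_one_atTop
  rw [hsplit] at hftc
  linarith

lemma setIntegral_Ioi_zero_logSechSqHalf {β : ℝ} (hβ : 0 < β) :
    ∫ u in Ioi 0, logSechSqHalf u =
      log β - (∫ u in (0 : ℝ)..β, tanh (u / 2) / u) +
        ∫ u in Ioi β, (1 - tanh (u / 2)) / u := by
  rw [← Ioc_union_Ioi_eq_Ioi hβ.le, setIntegral_union (Ioc_disjoint_Ioi le_rfl) measurableSet_Ioi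
    (integrableOn_logSechSqHalf.mono_set Ioc_subset_Ioi_self)
    (integrableOn_logSechSqHalf.mono_set (Ioi_subset_Ioi hβ.le)),
    setIntegral_Ioc_logSechSqHalf hβ, setIntegral_Ioi_logSechSqHalf hβ]
  ring

lemma Bph_add_two_mul_log_sub {β : ℝ} (hβ : 0 < β) :
    Bph β + 2 * log β - 2 * ∫ u in Ioi 0, logSechSqHalf u =
      -2 * ∫ u in Ioi β, (1 - tanh (u / 2)) / u := by
  rw [Bph_eq_neg_two_mul_integral hβ, setIntegral_Ioi_zero_logSechSqHalf hβ]
  ring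

/-- **Asymptotics of the particle–hole bubble.** With
`K = ∫₀^∞ (log u)/(2 cosh²(u/2)) du`, there are constants `C` and `β₀ > 0` such that
`|B_ph(β) + 2 log β - 2 K| ≤ C e^{-β}` for all `β ≥ β₀`. -/
theorem stmt_18 :
    ∃ C β₀ : ℝ, 0 < β₀ ∧ ∀ β : ℝ, β₀ ≤ β →
      |Bph β + 2 * Real.log β -
          2 * ∫ u in Set.Ioi (0 : ℝ), Real.log u / (2 * (Real.cosh (u / 2)) ^ 2)| ≤
        C * Real.exp (-β) := by
  refine ⟨4, 1, one_pos, fun β hβ => ?_⟩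
  have hβ0 : 0 < β := one_pos.trans_le hβ
  change |Bph β + 2 * log β - 2 * ∫ u in Ioi 0, logSechSqHalf u| ≤ 4 * exp (-β)
  rw [Bph_add_two_mul_log_sub hβ0, abs_mul, abs_neg, abs_two,
    abs_of_nonneg (integral_one_sub_tanh_half_div_nonneg hβ0)]
  calc 2 * ∫ u in Ioi β, (1 - tanh (u / 2)) / u ≤ 2 * (2 / β * exp (-β)) := by
        gcongr; exact integral_one_sub_tanh_half_div_le hβ0
    _ ≤ 2 * (2 * exp (-β)) := by gcongr; exact div_le_self zero_le_two hβ
    _ = 4 * exp (-β) := by ring
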